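/- Every overlap-free infinite binary word w other than the Thue–Morse word t and its complement t̄ satisfies 1/4 ≤ LSD(w, t) ≤ USD(w, t) ≤ 3/4. -/

import Mathlib

/-- The Thue–Morse sequence as a binary sequence. -/
def tb (n : ℕ) : Bool := (Nat.digits 2 n).count 1 % 2 == 1

/-- A binary infinite word is overlap-free if it contains no factor of the
form `a x a x a` (a single letter `a`, possibly empty word `x`), i.e., no
factor of length `2k+1` with period `k` for some `k ≥ 1`. -/
def OverlapFree (w : ℕ → Bool) : Prop :=
  ¬ ∃ p k : ℕ, 0 < k ∧ ∀ j ≤ k, w (p + j) = w (p + k + j)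

noncomputable def SDp (x y : ℕ → Bool) (n : ℕ) : ℝ :=
  (∑ i ∈ Finset.range n, if x i = y i then (1 : ℝ) else 0) / n

noncomputable def LSD (x y : ℕ → Bool) : ℝ := Filter.liminf (SDp x y) Filter.atTop
noncomputable def USD (x y : ℕ → Bool) : ℝ := Filter.limsup (SDp x y) Filter.atTop


/-!
Squares `b b` of letters occur in an overlap-free word only at positions of one parity
(position `0` aside), so every overlap-free `w` is `mu z`, `a · mu z` or `a a · mu z` with `z`
overlap-free. Since `tb = mu tb`, agreement counts with `tb` double along `mu`, so bounds
`n/4 - C ≤ #{i < n | agreement} ≤ 3n/4 + C` for `z` lift to `w`. If `w = mu^[n] z` for every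
`n`, then `w` is `tb` or its complement. Otherwise some level has a prefix. For `a · mu z`, of
the positions `4i+1, 4i+2` (equal letters in `tb`, different letters in `a · mu z`) exactly one
agrees. For `a a · mu z`, the word `z` is compared with `tb` shifted by one; the same trichotomy
applies to `z`, the middle case now being forced into the shape `psi`. If `z` is `psi` iterated
forever, it agrees with shifted `tb` exactly on the dyadic blocks `[2^k - 1, 2^(k+1) - 1)` of one
parity of `k`, a density oscillating between `1/3` and `2/3`.
-/

/-- The Thue–Morse morphism `0 ↦ 01`, `1 ↦ 10`. -/
def mu (z : ℕ → Bool) (m : ℕ) : Bool := if m % 2 = 0 then z (m / 2) else !z (m / 2)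

def shift {α : Type*} (l : ℕ) (x : ℕ → α) (m : ℕ) : α := x (l + m)

def psi (z : ℕ → Bool) : ℕ → Bool
  | 0 => !z 0
  | m + 1 => mu z m

@[simp] lemma mu_two_mul (z : ℕ → Bool) (j : ℕ) : mu z (2 * j) = z j := by
  simp [mu]

@[simp] lemma mu_two_mul_add_one (z : ℕ → Bool) (j : ℕ) : mu z (2 * j + 1) = !z j := by
  simp [mu, Nat.add_mod, Nat.add_div]

@[simp] lemma mu_zero (z : ℕ → Bool) : mu z 0 = z 0 := by
  simp [mu]

@[simp] lemma psi_zero (z : ℕ → Bool) : psi z 0 = !z 0 := rfl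

@[simp] lemma psi_succ (z : ℕ → Bool) (m : ℕ) : psi z (m + 1) = mu z m := rfl

lemma eq_mu_of_ne_succ {x : ℕ → Bool} (h : ∀ j, x (2 * j) ≠ x (2 * j + 1)) :
    x = mu (fun j => x (2 * j)) := by
  ext m
  obtain ⟨j, rfl | rfl⟩ := Nat.even_or_odd' m
  · rw [mu_two_mul]
  · rw [mu_two_mul_add_one, Bool.eq_not_iff]
    exact (h j).symm

@[simp] lemma shift_zero {α : Type*} (x : ℕ → α) : shift 0 x = x := by
  ext m; simp [shift]

lemma shift_shift {α : Type*} (k l : ℕ) (x : ℕ → α) :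
    shift k (shift l x) = shift (l + k) x := by
  ext m; simp [shift, Nat.add_assoc]

lemma shift_two_mul_mu (l : ℕ) (x : ℕ → Bool) : shift (2 * l) (mu x) = mu (shift l x) := by
  ext m
  obtain ⟨j, rfl | rfl⟩ := Nat.even_or_odd' m
  · rw [shift, ← mul_add, mu_two_mul, mu_two_mul, shift]
  · rw [shift, ← add_assoc, ← mul_add, mu_two_mul_add_one, mu_two_mul_add_one, shift]

@[simp] lemma shift_one_psi (z : ℕ → Bool) : shift 1 (psi z) = mu z := by
  ext m; simp [shift, add_comm 1 m]

@[simp] lemma tb_zero : tb 0 = false := rfl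

lemma tb_two_mul (n : ℕ) : tb (2 * n) = tb n := by
  rcases Nat.eq_zero_or_pos n with rfl | hn
  · rfl
  · simp [tb, Nat.digits_def' (by norm_num : 1 < 2) (by omega : 0 < 2 * n)]

lemma tb_two_mul_add_one (n : ℕ) : tb (2 * n + 1) = !tb n := by
  simp only [tb, Nat.digits_def' (by norm_num : 1 < 2) (by omega : 0 < 2 * n + 1)]
  rw [show (2 * n + 1) % 2 = 1 by omega, show (2 * n + 1) / 2 = n by omega, List.count_cons_self]
  rcases Nat.mod_two_eq_zero_or_one ((Nat.digits 2 n).count 1) with h | h <;>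
    simp [Nat.add_mod, h]

lemma mu_tb : mu tb = tb := by
  ext m
  obtain ⟨j, rfl | rfl⟩ := Nat.even_or_odd' m
  · rw [mu_two_mul, tb_two_mul]
  · rw [mu_two_mul_add_one, tb_two_mul_add_one]

lemma tb_four_mul_add_one (i : ℕ) : tb (4 * i + 1) = tb (4 * i + 2) := by
  rw [show 4 * i + 1 = 2 * (2 * i) + 1 by ring, show 4 * i + 2 = 2 * (2 * i + 1) by ring,
    tb_two_mul_add_one, tb_two_mul, tb_two_mul, tb_two_mul_add_one]

lemma mu_iterate_apply (z : ℕ → Bool) {n r : ℕ} (hr : r < 2 ^ n) (q : ℕ) :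
    mu^[n] z (2 ^ n * q + r) = xor (tb r) (z q) := by
  induction n generalizing r q with
  | zero => simp_all
  | succ n ih =>
    rw [Function.iterate_succ_apply']
    obtain ⟨s, rfl | rfl⟩ := Nat.even_or_odd' r
    · rw [pow_succ, mul_comm _ 2, mul_assoc, ← mul_add, mu_two_mul, ih (by omega), tb_two_mul]
    · rw [pow_succ, mul_comm _ 2, mul_assoc, ← add_assoc, ← mul_add, mu_two_mul_add_one,
        ih (by omega), tb_two_mul_add_one, Bool.not_xor]

lemma tb_two_pow_add {k i : ℕ} (hi : i < 2 ^ k) : tb (2 ^ k + i) = !tb i := by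
  have h := mu_iterate_apply tb hi 1
  rwa [Function.iterate_fixed mu_tb, mul_one, show tb 1 = true from rfl, Bool.xor_true] at h

lemma psi_iterate_apply_zero (y : ℕ → Bool) (k : ℕ) : psi^[k] y 0 = xor (y 0) k.bodd := by
  induction k with
  | zero => simp
  | succ k ih => simp [Function.iterate_succ_apply', ih]

lemma psi_iterate_apply (y : ℕ → Bool) {k i : ℕ} (hi : i < 2 ^ k) :
    psi^[k] y (2 ^ k - 1 + i) = xor (tb i) (y 0) := by
  induction k generalizing i with
  | zero => simp_all
  | succ k ih =>
    have hk : 1 ≤ 2 ^ k := Nat.one_le_two_pow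
    rw [Function.iterate_succ_apply']
    obtain ⟨s, rfl | rfl⟩ := Nat.even_or_odd' i
    · rw [show 2 ^ (k + 1) - 1 + 2 * s = 2 * (2 ^ k - 1 + s) + 1 by rw [pow_succ]; omega, psi_succ,
        mu_two_mul, ih (by rw [pow_succ] at hi; omega), tb_two_mul]
    · rw [show 2 ^ (k + 1) - 1 + (2 * s + 1) = 2 * (2 ^ k - 1 + s) + 1 + 1 by rw [pow_succ]; omega,
        psi_succ, mu_two_mul_add_one, ih (by rw [pow_succ] at hi; omega), tb_two_mul_add_one,
        Bool.not_xor]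

namespace OverlapFree

variable {w : ℕ → Bool}

lemma suffix (hw : OverlapFree w) (l : ℕ) : OverlapFree (shift l w) := by
  rintro ⟨p, k, hk, h⟩
  exact hw ⟨l + p, k, hk, fun j hj => by simpa [shift, add_assoc] using h j hj⟩

lemma of_mu {z : ℕ → Bool} (hz : OverlapFree (mu z)) : OverlapFree z := by
  rintro ⟨p, k, hk, h⟩
  refine hz ⟨2 * p, 2 * k, by omega, fun j hj => ?_⟩
  obtain ⟨i, rfl | rfl⟩ := Nat.even_or_odd' j
  · simpa [← mul_add] using h i (by omega)
  · simpa [← mul_add, ← add_assoc] using h i (by omega)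

lemma of_shift_eq_mu {l : ℕ} {z : ℕ → Bool} (hw : OverlapFree w) (h : shift l w = mu z) :
    OverlapFree z :=
  of_mu (h ▸ hw.suffix l)

lemma ne_of_eq_succ (hw : OverlapFree w) {i : ℕ} (h : w i = w (i + 1)) :
    w (i + 1) ≠ w (i + 2) :=
  fun h' => hw ⟨i, 1, one_pos, fun j hj => by interval_cases j <;> simpa⟩

lemma exists_eq_succ (hw : OverlapFree w) (i : ℕ) : ∃ s < 4, w (i + s) = w (i + s + 1) := by
  by_contra! h
  have alt : ∀ s < 4, w (i + s + 1) = !w (i + s) := fun s hs =>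
    Bool.eq_not_iff.2 (h s hs).symm
  refine hw ⟨i, 2, two_pos, fun j hj => ?_⟩
  have := alt 0; have := alt 1; have := alt 2; have := alt 3
  interval_cases j <;> simp_all

lemma even_of_eq_succ (hw : OverlapFree w) {i d : ℕ} (hi : 1 ≤ i) (h : w i = w (i + 1))
    (hd : w (i + d) = w (i + d + 1)) : Even d := by
  induction d using Nat.strong_induction_on generalizing i with
  | _ d ih =>
  by_cases hmid : ∃ q, 0 < q ∧ q < d ∧ w (i + q) = w (i + q + 1)
  · obtain ⟨q, hq0, hqd, hq⟩ := hmid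
    have hrest : w (i + q + (d - q)) = w (i + q + (d - q) + 1) := by
      rwa [show i + q + (d - q) = i + d by omega]
    have := (ih q hqd hi h hq).add (ih (d - q) (by omega) (by omega) hq hrest)
    rwa [Nat.add_sub_cancel' hqd.le] at this
  push Not at hmid
  have hd4 : d ≤ 4 := by
    by_contra! hd4
    obtain ⟨s, hs, hs'⟩ := hw.exists_eq_succ (i + 1)
    exact hmid (s + 1) (by omega) (by omega) (by simpa [add_assoc, add_comm 1 s] using hs')
  by_contra hodd
  obtain rfl | rfl : d = 1 ∨ d = 3 := by
    rw [Nat.not_even_iff_odd] at hodd; obtain ⟨c, rfl⟩ := hodd; omega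
  · exact hw.ne_of_eq_succ h hd
  · -- the factor around the two squares is `b a a b a a b`
    obtain ⟨i, rfl⟩ : ∃ i', i = i' + 1 := ⟨i - 1, by omega⟩
    have h1 := hmid 1 one_pos (by omega)
    have h2 := hmid 2 two_pos (by omega)
    have hl := hw.ne_of_eq_succ (i := i)
    have hr := hw.ne_of_eq_succ (i := i + 4)
    refine hw ⟨i, 3, by omega, fun j hj => ?_⟩
    simp only [add_assoc] at *
    interval_cases j <;> revert h h1 h2 hd hl hr <;>
      cases w i <;> cases w (i + 1) <;> cases w (i + 2) <;> cases w (i + 3) <;>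
      cases w (i + 4) <;> cases w (i + 5) <;> cases w (i + 6) <;> simp

end OverlapFree

namespace OverlapFree

variable {w : ℕ → Bool}

lemma mod_two_eq_of_eq_succ (hw : OverlapFree w) {i j : ℕ} (hi : 1 ≤ i) (hj : 1 ≤ j)
    (h : w i = w (i + 1)) (h' : w j = w (j + 1)) : i % 2 = j % 2 := by
  wlog hij : i ≤ j generalizing i j
  · exact (this hj hi h' h (by omega)).symm
  obtain ⟨d, rfl⟩ := Nat.exists_eq_add_of_le hij
  obtain ⟨c, rfl⟩ := hw.even_of_eq_succ hi h h'
  omega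

theorem exists_mu (hw : OverlapFree w) :
    ∃ z, w = mu z ∨ shift 1 w = mu z ∨ (w 0 = w 1 ∧ shift 2 w = mu z) := by
  obtain ⟨s, -, hs⟩ := hw.exists_eq_succ 1
  have parity : ∀ j, 1 ≤ j → w j = w (j + 1) → j % 2 = (1 + s) % 2 :=
    fun j hj h => hw.mod_two_eq_of_eq_succ hj (by omega) h hs
  rcases Nat.mod_two_eq_zero_or_one (1 + s) with hs2 | hs2
  · refine ⟨_, Or.inr (Or.inl (eq_mu_of_ne_succ fun j h => ?_))⟩
    have := parity (1 + 2 * j) (by omega) h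
    omega
  by_cases h01 : w 0 = w 1
  · refine ⟨_, Or.inr (Or.inr ⟨h01, eq_mu_of_ne_succ fun j h => ?_⟩)⟩
    have := parity (2 + 2 * j) (by omega) h
    omega
  · refine ⟨_, Or.inl (eq_mu_of_ne_succ fun j h => ?_)⟩
    rcases Nat.eq_zero_or_pos j with rfl | hj
    · exact h01 h
    · have := parity (2 * j) (by omega) h
      omega

/-- Here `psi z = (!c) c (!c) · mu (mu z')` with `c = z 0`, and `z' 0 = c` would create the overlap
`(!c) c (!c) c (!c)`. -/
lemma eq_psi_of_shift_eq_mu {z z' : ℕ → Bool} (hz : OverlapFree (psi z))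
    (h : shift 1 z = mu z') : z = psi z' := by
  ext m
  cases m with
  | succ m => simpa [shift, add_comm] using congrFun h m
  | zero =>
    have h1 : z 1 = z' 0 := by simpa [shift] using congrFun h 0
    rw [psi_zero, Bool.eq_not_iff]
    intro h0
    refine hz ⟨0, 2, two_pos, fun j hj => ?_⟩
    interval_cases j <;> simp [mu, h0, h1]

lemma shift_eq_psi_of_shift_eq_mu {z : ℕ → Bool} (hw : OverlapFree w) (h01 : w 0 = w 1)
    (h : shift 2 w = mu z) : shift 1 w = psi z := by
  have h2 : w 2 = z 0 := by simpa [shift] using congrFun h 0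
  ext m
  cases m with
  | zero => exact Bool.eq_not_iff.2 fun h1 => hw.ne_of_eq_succ h01 (h1.trans h2.symm)
  | succ m => simpa [shift, add_comm, add_left_comm] using congrFun h m

end OverlapFree

def agreeCount (x y : ℕ → Bool) (n : ℕ) : ℕ :=
  ∑ i ∈ Finset.range n, if x i = y i then 1 else 0

section agreeCount

variable {x y : ℕ → Bool}

lemma agreeCount_succ (n : ℕ) :
    agreeCount x y (n + 1) = agreeCount x y n + if x n = y n then 1 else 0 :=
  Finset.sum_range_succ _ _

lemma agreeCount_le (n : ℕ) : agreeCount x y n ≤ n := by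
  simpa [agreeCount] using Finset.card_filter_le (Finset.range n) fun i => x i = y i

lemma agreeCount_add (l n : ℕ) :
    agreeCount x y (l + n) = agreeCount x y l + agreeCount (shift l x) (shift l y) n :=
  Finset.sum_range_add _ _ _

lemma agreeCount_le_agreeCount_add (l n : ℕ) : agreeCount x y l ≤ agreeCount x y (l + n) := by
  rw [agreeCount_add]; omega

lemma agreeCount_add_le (l n : ℕ) : agreeCount x y (l + n) ≤ agreeCount x y l + n := by
  rw [agreeCount_add]; exact Nat.add_le_add_left (agreeCount_le n) _

lemma agreeCount_of_eq {n : ℕ} (h : ∀ i < n, x i = y i) : agreeCount x y n = n := by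
  rw [agreeCount, Finset.sum_congr rfl fun i hi => if_pos (h i (Finset.mem_range.1 hi))]
  simp

lemma agreeCount_add_of_eq {l n : ℕ} (h : ∀ i < n, x (l + i) = y (l + i)) :
    agreeCount x y (l + n) = agreeCount x y l + n := by
  rw [agreeCount_add, agreeCount_of_eq (x := shift l x) (y := shift l y) h]

lemma agreeCount_mu (n : ℕ) : agreeCount (mu x) (mu y) (2 * n) = 2 * agreeCount x y n := by
  induction n with
  | zero => rfl
  | succ n ih =>
    rw [mul_add_one, agreeCount_succ, agreeCount_succ, ih, agreeCount_succ]
    simp only [mu_two_mul, mu_two_mul_add_one, Bool.not_inj_iff]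
    split <;> ring

lemma agreeCount_add_agreeCount_not (n : ℕ) :
    agreeCount x y n + agreeCount x (fun m => !y m) n = n := by
  induction n with
  | zero => rfl
  | succ n ih =>
    rw [agreeCount_succ, agreeCount_succ]
    by_cases h : x n = y n <;> simp [h, Bool.eq_not_iff] <;> omega

end agreeCount

def SimBounded (x y : ℕ → Bool) : Prop :=
  ∃ C, ∀ n, n ≤ 4 * agreeCount x y n + C ∧ 4 * agreeCount x y n ≤ 3 * n + C

namespace SimBounded

variable {x y : ℕ → Bool}

lemma of_mul {p : ℕ} (hp : 0 < p) (C : ℕ)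
    (h : ∀ n, p * n ≤ 4 * agreeCount x y (p * n) + C ∧
      4 * agreeCount x y (p * n) ≤ 3 * (p * n) + C) :
    SimBounded x y := by
  refine ⟨C + 4 * p, fun n => ?_⟩
  have hn : p * (n / p) + n % p = n := Nat.div_add_mod n p
  have hr : n % p < p := Nat.mod_lt n hp
  have lo := agreeCount_le_agreeCount_add (x := x) (y := y) (p * (n / p)) (n % p)
  have hi := agreeCount_add_le (x := x) (y := y) (p * (n / p)) (n % p)
  rw [hn] at lo hi
  have := h (n / p)
  omega

lemma of_shift (l : ℕ) (h : SimBounded (shift l x) (shift l y)) : SimBounded x y := by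
  obtain ⟨C, hC⟩ := h
  refine ⟨C + 4 * l, fun n => ?_⟩
  rcases le_or_gt l n with hln | hnl
  · obtain ⟨m, rfl⟩ := Nat.exists_eq_add_of_le hln
    have := agreeCount_add (x := x) (y := y) l m
    have := agreeCount_le (x := x) (y := y) l
    have := hC m
    omega
  · have := agreeCount_le (x := x) (y := y) n
    omega

lemma map_mu (h : SimBounded x y) : SimBounded (mu x) (mu y) := by
  obtain ⟨C, hC⟩ := h
  refine of_mul two_pos (2 * C) fun n => ?_
  rw [agreeCount_mu]
  have := hC n
  omega

end SimBounded

lemma simBounded_of_pairs {x y : ℕ → Bool} (hx : ∀ i, x (4 * i) ≠ x (4 * i + 1))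
    (hy : ∀ i, y (4 * i) = y (4 * i + 1)) : SimBounded x y := by
  have one_agree : ∀ i, (if x (4 * i) = y (4 * i) then 1 else 0) +
      (if x (4 * i + 1) = y (4 * i + 1) then 1 else 0) = 1 := fun i => by
    have := hx i; rw [← hy i]
    revert this; cases x (4 * i) <;> cases x (4 * i + 1) <;> cases y (4 * i) <;> simp
  have bounds : ∀ n, n ≤ agreeCount x y (4 * n) ∧ agreeCount x y (4 * n) ≤ 3 * n := by
    intro n
    induction n with
    | zero => simp [agreeCount]
    | succ n ih =>
      rw [show 4 * (n + 1) = 4 * n + 1 + 1 + 1 + 1 by ring]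
      simp only [agreeCount_succ]
      have := one_agree n
      split_ifs at this ⊢ <;> omega
  exact SimBounded.of_mul (p := 4) four_pos 0 fun n => by have := bounds n; omega

lemma SimBounded.of_shift_eq_mu {x y z : ℕ → Bool} {l : ℕ} (h : shift l x = mu z) (b : ℕ)
    (hy : ∀ i, y (l + 2 * b + 4 * i) = y (l + 2 * b + 4 * i + 1)) : SimBounded x y := by
  refine SimBounded.of_shift (l + 2 * b) (simBounded_of_pairs (fun i => ?_) hy)
  have : mu z (2 * (b + 2 * i)) ≠ mu z (2 * (b + 2 * i) + 1) := by simp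
  rw [← h] at this
  simpa [shift, mul_add, ← mul_assoc, add_assoc] using this

/-- Among the first `n` positions, the dyadic blocks of parity `b` fill at least a quarter: they
contain either the next-to-last block, or the last (partial) block together with the one two
steps before it. -/
lemma le_four_mul_agreeCount_of_log {x y : ℕ → Bool} {b : Bool}
    (h : ∀ m, x m = y m ↔ (Nat.log 2 (m + 1)).bodd = b) (n : ℕ) :
    n ≤ 4 * agreeCount x y n + 3 := by
  have block : ∀ j L, j.bodd = b → L ≤ 2 ^ j →
      agreeCount x y (2 ^ j - 1) + L = agreeCount x y (2 ^ j - 1 + L) := fun j L hj hL =>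
    (agreeCount_add_of_eq fun i hi => (h _).2 <| by
      rw [Nat.log_eq_of_pow_le_of_lt_pow (m := j) (by omega) (by rw [pow_succ]; omega), hj]).symm
  rcases lt_or_ge n 4 with hn | hn
  · omega
  obtain ⟨k, hk⟩ : ∃ k, Nat.log 2 n = k + 2 :=
    ⟨Nat.log 2 n - 2, by have := Nat.le_log_of_pow_le (b := 2) (x := 2) (by norm_num) hn; omega⟩
  have hlo : 2 ^ (k + 2) ≤ n := hk ▸ Nat.pow_log_le_self 2 (by omega)
  have hhi : n < 2 ^ (k + 3) := by
    simpa [hk] using Nat.lt_pow_succ_log_self (b := 2) (by norm_num) n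
  have p1 : 2 ^ (k + 1) = 2 * 2 ^ k := by ring
  have p2 : 2 ^ (k + 2) = 4 * 2 ^ k := by ring
  have p3 : 2 ^ (k + 3) = 8 * 2 ^ k := by ring
  have pos : 1 ≤ 2 ^ k := Nat.one_le_two_pow
  by_cases hkb : k.bodd = b
  · have b0 := block k (2 ^ k) hkb le_rfl
    have b2 := block (k + 2) (n + 1 - 2 ^ (k + 2)) (by simpa using hkb) (by omega)
    have m := agreeCount_le_agreeCount_add (x := x) (y := y) (2 ^ k - 1 + 2 ^ k) (2 ^ (k + 1))
    rw [show 2 ^ k - 1 + 2 ^ k + 2 ^ (k + 1) = 2 ^ (k + 2) - 1 by omega] at m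
    rw [show 2 ^ (k + 2) - 1 + (n + 1 - 2 ^ (k + 2)) = n by omega] at b2
    omega
  · have b1 := block (k + 1) (2 ^ (k + 1)) (by simp [Bool.eq_not_iff, hkb]) le_rfl
    have m := agreeCount_le_agreeCount_add (x := x) (y := y) (2 ^ (k + 1) - 1 + 2 ^ (k + 1))
      (n - (2 ^ (k + 2) - 1))
    rw [show 2 ^ (k + 1) - 1 + 2 ^ (k + 1) + (n - (2 ^ (k + 2) - 1)) = n by omega] at m
    omega

lemma simBounded_of_log {x y : ℕ → Bool} {b : Bool}
    (h : ∀ m, x m = y m ↔ (Nat.log 2 (m + 1)).bodd = b) : SimBounded x y := by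
  have h' : ∀ m, x m = !y m ↔ (Nat.log 2 (m + 1)).bodd = !b := fun m => by
    rw [Bool.eq_not_iff, Ne, h, Bool.eq_not_iff]
  refine ⟨3, fun n => ⟨le_four_mul_agreeCount_of_log h n, ?_⟩⟩
  have := le_four_mul_agreeCount_of_log h' n
  have := agreeCount_add_agreeCount_not (x := x) (y := y) n
  omega

lemma SDp_eq (x y : ℕ → Bool) (n : ℕ) : SDp x y n = agreeCount x y n / n := by
  simp [SDp, agreeCount]

open Filter in
lemma SimBounded.bounds_LSD_USD {x y : ℕ → Bool} (h : SimBounded x y) :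
    1/4 ≤ LSD x y ∧ LSD x y ≤ USD x y ∧ USD x y ≤ 3/4 := by
  obtain ⟨C, hC⟩ := h
  have lower : ∀ n ≥ 1, 1/4 - (C : ℝ) / n ≤ SDp x y n := fun n hn => by
    have : (n : ℝ) ≤ 4 * agreeCount x y n + C := by exact_mod_cast (hC n).1
    rw [SDp_eq, sub_le_iff_le_add, ← add_div, le_div_iff₀ (by positivity)]
    linarith
  have upper : ∀ n ≥ 1, SDp x y n ≤ 3/4 + (C : ℝ) / n := fun n hn => by
    have : 4 * (agreeCount x y n : ℝ) ≤ 3 * n + C := by exact_mod_cast (hC n).2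
    rw [SDp_eq, div_le_iff₀ (by positivity), add_mul, div_mul_cancel₀ _ (by positivity)]
    linarith
  have mem_Icc : ∀ n, SDp x y n ∈ Set.Icc 0 1 := fun n => by
    rw [SDp_eq]
    exact ⟨by positivity, div_le_one_of_le₀ (by exact_mod_cast agreeCount_le n) n.cast_nonneg⟩
  have above : IsBoundedUnder (· ≤ ·) atTop (SDp x y) :=
    isBoundedUnder_of ⟨1, fun n => (mem_Icc n).2⟩
  have below : IsBoundedUnder (· ≥ ·) atTop (SDp x y) :=
    isBoundedUnder_of ⟨0, fun n => (mem_Icc n).1⟩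
  have hC0 := tendsto_const_div_atTop_nhds_zero_nat (C : ℝ)
  have tlo : Tendsto (fun n : ℕ => 1/4 - (C : ℝ) / n) atTop (nhds (1/4)) := by
    simpa using tendsto_const_nhds.sub hC0
  have thi : Tendsto (fun n : ℕ => 3/4 + (C : ℝ) / n) atTop (nhds (3/4)) := by
    simpa using tendsto_const_nhds.add hC0
  refine ⟨?_, liminf_le_limsup above below, ?_⟩
  · rw [← tlo.liminf_eq]
    exact liminf_le_liminf (eventually_atTop.2 ⟨1, lower⟩) tlo.isBoundedUnder_ge
      above.isCoboundedUnder_ge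
  · rw [← thi.limsup_eq]
    exact limsup_le_limsup (eventually_atTop.2 ⟨1, upper⟩) below.isCoboundedUnder_le
      thi.isBoundedUnder_le

lemma shift_two_tb : shift 2 tb = mu (shift 1 tb) := by
  simpa [mu_tb] using shift_two_mul_mu 1 tb

lemma exists_psi_iterate_or_simBounded (n : ℕ) {z : ℕ → Bool} (hz : OverlapFree (psi z)) :
    SimBounded z (shift 1 tb) ∨ ∃ y, z = psi^[n] y := by
  induction n generalizing z with
  | zero => exact Or.inr ⟨z, rfl⟩
  | succ n ih =>
    have hz' : OverlapFree z := hz.of_shift_eq_mu (shift_one_psi z)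
    obtain ⟨z', h0 | h1 | ⟨-, h2⟩⟩ := hz'.exists_mu
    · refine Or.inl (SimBounded.of_shift_eq_mu (l := 0) (by simpa using h0) 0 fun i => ?_)
      simp only [shift]
      convert tb_four_mul_add_one i using 2 <;> omega
    · obtain rfl := hz.eq_psi_of_shift_eq_mu h1
      rcases ih hz' with hb | ⟨y, rfl⟩
      · refine Or.inl (SimBounded.of_shift 1 ?_)
        rw [shift_one_psi, shift_shift, shift_two_tb]
        exact hb.map_mu
      · exact Or.inr ⟨y, (Function.iterate_succ_apply' psi n y).symm⟩
    · refine Or.inl (SimBounded.of_shift_eq_mu h2 1 fun i => ?_)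
      simp only [shift]
      convert tb_four_mul_add_one (i + 1) using 2 <;> omega

lemma simBounded_of_forall_psi_iterate {z : ℕ → Bool} (h : ∀ k, ∃ y, z = psi^[k] y) :
    SimBounded z (shift 1 tb) := by
  refine simBounded_of_log (b := !z 0) fun m => ?_
  set k := Nat.log 2 (m + 1)
  have hlo : 2 ^ k ≤ m + 1 := Nat.pow_log_le_self 2 (by omega)
  have hhi : m + 1 < 2 ^ (k + 1) := Nat.lt_pow_succ_log_self (by norm_num) _
  obtain ⟨i, hi, hm⟩ : ∃ i < 2 ^ k, m = 2 ^ k - 1 + i :=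
    ⟨m + 1 - 2 ^ k, by rw [pow_succ] at hhi; omega, by omega⟩
  obtain ⟨y, hy⟩ := h k
  have hzm : z m = xor (tb i) (y 0) := by rw [hm, hy, psi_iterate_apply y hi]
  have htm : shift 1 tb m = !tb i := by
    rw [shift, show 1 + m = 2 ^ k + i by omega, tb_two_pow_add hi]
  have hz0 : z 0 = xor (y 0) k.bodd := by rw [hy, psi_iterate_apply_zero]
  rw [hzm, htm, hz0]
  cases tb i <;> cases y 0 <;> cases k.bodd <;> simp

lemma simBounded_of_overlapFree_psi {z : ℕ → Bool} (hz : OverlapFree (psi z)) :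
    SimBounded z (shift 1 tb) := by
  by_cases h : ∀ k, ∃ y, z = psi^[k] y
  · exact simBounded_of_forall_psi_iterate h
  · obtain ⟨k, hk⟩ := not_forall.1 h
    exact (exists_psi_iterate_or_simBounded k hz).resolve_right hk

lemma exists_mu_iterate_or_simBounded (n : ℕ) {u : ℕ → Bool} (hu : OverlapFree u) :
    SimBounded u tb ∨ ∃ z, u = mu^[n] z := by
  induction n generalizing u with
  | zero => exact Or.inr ⟨u, rfl⟩
  | succ n ih =>
    obtain ⟨z, rfl | h1 | ⟨h01, h2⟩⟩ := hu.exists_mu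
    · rcases ih hu.of_mu with hb | ⟨y, rfl⟩
      · exact Or.inl (by simpa [mu_tb] using hb.map_mu)
      · exact Or.inr ⟨y, (Function.iterate_succ_apply' mu n y).symm⟩
    · exact Or.inl (SimBounded.of_shift_eq_mu h1 0 fun i => by
        convert tb_four_mul_add_one i using 2 <;> omega)
    · have hz : OverlapFree (psi z) := hu.shift_eq_psi_of_shift_eq_mu h01 h2 ▸ hu.suffix 1
      refine Or.inl (SimBounded.of_shift 2 ?_)
      rw [h2, shift_two_tb]
      exact (simBounded_of_overlapFree_psi hz).map_mu

lemma eq_xor_tb_of_forall_mu_iterate {w : ℕ → Bool} (h : ∀ n, ∃ z, w = mu^[n] z) :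
    w = fun m => xor (tb m) (w 0) := by
  ext m
  obtain ⟨z, rfl⟩ := h m
  have hm := mu_iterate_apply z m.lt_two_pow_self 0
  have h0 := mu_iterate_apply z (r := 0) (Nat.two_pow_pos m) 0
  simp only [mul_zero, zero_add] at hm h0
  rw [hm, h0, tb_zero, Bool.false_xor]

theorem main_theorem (w : ℕ → Bool) (hw : OverlapFree w)
    (h1 : w ≠ tb) (h2 : w ≠ fun n => !(tb n)) :
    1/4 ≤ LSD w tb ∧ LSD w tb ≤ USD w tb ∧ USD w tb ≤ 3/4 := by
  refine SimBounded.bounds_LSD_USD (by_contra fun hb => ?_)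
  have hw' := eq_xor_tb_of_forall_mu_iterate fun n =>
    (exists_mu_iterate_or_simBounded n hw).resolve_left hb
  cases h : w 0 <;> simp only [h, Bool.xor_false, Bool.xor_true] at hw'
  · exact h1 hw'
  · exact h2 hw'
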